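/- arXiv:2312.07084 — 4 statements merged into one kernel-verified Lean document; each statement's English description precedes it below -/
import Mathlib

section
/- Explicit moment formula for the reflecting weight (Lemma 4.1, identity (ziid0)): for every k ∈ ℕ, E[Z^k · m̄] = (Δ^{k/2}/√(2π)) · ( ∫_{−a}^{∞} z^k e^{−z²/2} dz + ∫_{a}^{∞} (z − 2a)^k e^{−z²/2} dz ). -/
open MeasureTheory ProbabilityTheory Real

/-!
Conditioning on `Z`, the independent uniform `U` replaces `1_{U ≤ p}` by `p`, so the moment is the
Gaussian integral of `zᵏ (1 + p(z))` over the half-line `{X > L}`. Writing `Z = √Δ W` with `W`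
standard normal, this half-line is `{W > -a}` and `p = exp (-2a(a + W))`. Since
`e^{-w²/2} e^{-2a(a+w)} = e^{-(w+2a)²/2}`, the `p`-part is the Gaussian integral of `wᵏ` centred at
`-2a`, and the shift `z = w + 2a` maps `(-a, ∞)` onto `(a, ∞)`.
-/

open Set
open scoped NNReal

lemma integral_uniformIcc_ite_le {t : ℝ} (ht₀ : 0 ≤ t) (ht₁ : t ≤ 1) :
    ∫ u, (if u ≤ t then (1 : ℝ) else 0) ∂(volume.restrict (Icc 0 1)) = t := by
  have hind : (fun u : ℝ => if u ≤ t then (1 : ℝ) else 0) = (Iic t).indicator 1 := by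
    ext u; simp [indicator_apply]
  have hinter : Iic t ∩ Icc 0 1 = Icc 0 t := by
    ext u; simp only [mem_inter_iff, mem_Iic, mem_Icc]; grind
  rw [hind, integral_indicator_one measurableSet_Iic,
    measureReal_restrict_apply measurableSet_Iic, hinter, Real.volume_real_Icc_of_le ht₀, sub_zero]

lemma ProbabilityTheory.IndepFun.integral_comp_prodMk {Ω α β E : Type*} [MeasurableSpace Ω]
    [MeasurableSpace α] [MeasurableSpace β] [NormedAddCommGroup E] [NormedSpace ℝ E] {μ : Measure Ω}
    [IsFiniteMeasure μ] {X : Ω → α} {Y : Ω → β} (hXY : IndepFun X Y μ) (hX : AEMeasurable X μ)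
    (hY : AEMeasurable Y μ) {F : α × β → E} (hF : Integrable F ((μ.map X).prod (μ.map Y))) :
    ∫ ω, F (X ω, Y ω) ∂μ = ∫ x, ∫ y, F (x, y) ∂(μ.map Y) ∂(μ.map X) := by
  rw [← integral_prod F hF, ← hXY.map_prod_eq_prod_map_map hX hY] at *
  exact (integral_map (hX.prodMk hY) hF.aestronglyMeasurable).symm

lemma integral_indicator_mul_one_add_ite_uniform_le {Ω : Type*} [MeasurableSpace Ω]
    {μ : Measure Ω} [IsProbabilityMeasure μ] {Z U : Ω → ℝ} (hZU : IndepFun Z U μ)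
    (hZ : Measurable Z) (hU : Measurable U) (hUlaw : μ.map U = volume.restrict (Icc 0 1))
    {s : Set ℝ} (hs : MeasurableSet s) {f g : ℝ → ℝ} (hf : Measurable f) (hg : Measurable g)
    (hfi : Integrable f (μ.map Z)) (hg₀₁ : ∀ z ∈ s, g z ∈ Icc 0 1) :
    ∫ ω, s.indicator f (Z ω) * (1 + if U ω ≤ g (Z ω) then 1 else 0) ∂μ
      = ∫ z in s, f z * (1 + g z) ∂(μ.map Z) := by
  set F : ℝ × ℝ → ℝ := fun q => s.indicator f q.1 * (1 + if q.2 ≤ g q.1 then 1 else 0)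
  have hFm : Measurable F := by
    refine ((hf.indicator hs).comp measurable_fst).mul (measurable_const.add ?_)
    exact Measurable.ite (measurableSet_le measurable_snd (hg.comp measurable_fst))
      measurable_const measurable_const
  have hF : Integrable F ((μ.map Z).prod (μ.map U)) := by
    refine (((hfi.indicator hs).norm.comp_fst _).const_mul 2).mono' hFm.aestronglyMeasurable
      (ae_of_all _ fun q => ?_)
    simp only [F, norm_mul]
    rw [mul_comm]
    gcongr
    split_ifs <;> norm_num
  have hinner : ∀ z, ∫ u, F (z, u) ∂(μ.map U) = s.indicator (fun z => f z * (1 + g z)) z := by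
    intro z
    by_cases hz : z ∈ s
    · have hite : Integrable (fun u : ℝ => if u ≤ g z then (1 : ℝ) else 0) (μ.map U) :=
        (integrable_const (1 : ℝ)).mono'
          (measurable_const.ite measurableSet_Iic measurable_const).aestronglyMeasurable
          (ae_of_all _ fun u => by split_ifs <;> simp)
      simp only [F, indicator_of_mem hz]
      rw [integral_const_mul, integral_add (integrable_const _) hite, hUlaw,
        integral_uniformIcc_ite_le (hg₀₁ z hz).1 (hg₀₁ z hz).2]
      simp
    · simp [F, hz]
  rw [← integral_indicator hs]
  exact (hZU.integral_comp_prodMk hZ.aemeasurable hU.aemeasurable hF).trans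
    (integral_congr_ae (ae_of_all _ hinner))

lemma integrable_pow_gaussianReal (m : ℝ) (v : ℝ≥0) (k : ℕ) :
    Integrable (fun x : ℝ => x ^ k) (gaussianReal m v) :=
  (integrable_norm_iff (by fun_prop)).1 <| by
    simpa [norm_pow] using (memLp_id_gaussianReal k).integrable_norm_pow'

lemma integral_gaussianReal_zero_eq {v : ℝ≥0} (hv : v ≠ 0) (h : ℝ → ℝ) :
    ∫ z, h z ∂(gaussianReal 0 v) = (√(2 * π))⁻¹ * ∫ w, h (√v * w) * exp (-w ^ 2 / 2) := by
  have hsqrt : √(v : ℝ) ≠ 0 := by positivity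
  have hmap : (gaussianReal 0 1).map (√v * ·) = gaussianReal 0 v := by
    rw [gaussianReal_map_const_mul, mul_zero, mul_one]
    congr 1
    exact NNReal.eq (by simp)
  rw [← hmap, (measurableEmbedding_mulLeft₀ hsqrt).integral_map,
    integral_gaussianReal_eq_integral_smul one_ne_zero, ← integral_const_mul]
  congr 1
  ext w
  simp [gaussianPDFReal]
  ring

lemma setIntegral_Ioi_gaussianReal_zero_eq {v : ℝ≥0} (hv : v ≠ 0) (c : ℝ) (h : ℝ → ℝ) :
    ∫ z in Ioi c, h z ∂(gaussianReal 0 v)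
      = (√(2 * π))⁻¹ * ∫ w in Ioi (c / √v), h (√v * w) * exp (-w ^ 2 / 2) := by
  have hsqrt : 0 < √(v : ℝ) := by positivity
  rw [← integral_indicator measurableSet_Ioi, integral_gaussianReal_zero_eq hv,
    ← integral_indicator measurableSet_Ioi]
  congr 1
  refine integral_congr_ae (ae_of_all _ fun w => ?_)
  simp only [indicator_apply, mem_Ioi, div_lt_iff₀' hsqrt]
  split_ifs <;> simp

lemma integrable_pow_mul_exp_neg_sq_div_two (k : ℕ) :
    Integrable fun z : ℝ => z ^ k * exp (-z ^ 2 / 2) := by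
  refine (integrable_rpow_mul_exp_neg_mul_sq (b := 1 / 2) (by norm_num) (s := k)
    (by linarith [k.cast_nonneg (α := ℝ)])).congr (ae_of_all _ fun z => ?_)
  simp only [rpow_natCast]
  ring_nf

lemma integrable_sub_pow_mul_exp_neg_sq_div_two (c : ℝ) (k : ℕ) :
    Integrable fun z : ℝ => (z - c) ^ k * exp (-z ^ 2 / 2) := by
  simp_rw [sub_eq_add_neg, add_pow, Finset.sum_mul]
  refine integrable_finsetSum _ fun m _ => ?_
  exact ((integrable_pow_mul_exp_neg_sq_div_two m).mul_const ((-c) ^ (k - m) * k.choose m)).congr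
    (ae_of_all _ fun z => by ring)

lemma integral_Ioi_pow_mul_one_add_exp_reflect (a : ℝ) (k : ℕ) :
    ∫ w in Ioi (-a), w ^ k * (1 + exp (-2 * a * (a + w))) * exp (-w ^ 2 / 2)
      = (∫ w in Ioi (-a), w ^ k * exp (-w ^ 2 / 2))
        + ∫ z in Ioi a, (z - 2 * a) ^ k * exp (-z ^ 2 / 2) := by
  set h : ℝ → ℝ := fun z => (z - 2 * a) ^ k * exp (-z ^ 2 / 2)
  have hsplit : ∀ w, w ^ k * (1 + exp (-2 * a * (a + w))) * exp (-w ^ 2 / 2)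
      = w ^ k * exp (-w ^ 2 / 2) + h (w + 2 * a) := by
    intro w
    have hexp : exp (-2 * a * (a + w)) * exp (-w ^ 2 / 2) = exp (-(w + 2 * a) ^ 2 / 2) := by
      rw [← exp_add]; ring_nf
    simp only [h, add_sub_cancel_right, ← hexp]
    ring
  have hshift : ∫ w in Ioi (-a), h (w + 2 * a) = ∫ z in Ioi a, h z := by
    have := (measurePreserving_add_right volume (2 * a)).setIntegral_preimage_emb
      (measurableEmbedding_addRight (2 * a)) h (Ioi a)
    rwa [preimage_add_const_Ioi, show a - 2 * a = -a by ring] at this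
  simp_rw [hsplit]
  rw [integral_add (integrable_pow_mul_exp_neg_sq_div_two k).integrableOn
    ((integrable_sub_pow_mul_exp_neg_sq_div_two _ k).comp_add_right (2 * a)).integrableOn, hshift]

lemma setIntegral_Ioi_pow_mul_one_add_exp_gaussianReal {v : ℝ≥0} (hv : v ≠ 0) (a : ℝ) (k : ℕ) :
    ∫ z in Ioi (-(a * √v)), z ^ k * (1 + exp (-2 * a * (a + z / √v))) ∂(gaussianReal 0 v)
      = (v : ℝ) ^ ((k : ℝ) / 2) / √(2 * π) *
          ((∫ w in Ioi (-a), w ^ k * exp (-w ^ 2 / 2))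
            + ∫ z in Ioi a, (z - 2 * a) ^ k * exp (-z ^ 2 / 2)) := by
  have hsqrt : 0 < √(v : ℝ) := by positivity
  have hintegrand : ∀ w, (√v * w) ^ k * (1 + exp (-2 * a * (a + √v * w / √v))) * exp (-w ^ 2 / 2)
      = √v ^ k * (w ^ k * (1 + exp (-2 * a * (a + w))) * exp (-w ^ 2 / 2)) := fun w => by
    rw [mul_div_cancel_left₀ _ hsqrt.ne']; ring
  have hpow : √(v : ℝ) ^ k = (v : ℝ) ^ ((k : ℝ) / 2) := by
    rw [sqrt_eq_rpow, ← rpow_natCast, ← rpow_mul v.coe_nonneg]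
    ring_nf
  rw [setIntegral_Ioi_gaussianReal_zero_eq hv, neg_div, mul_div_cancel_right₀ _ hsqrt.ne']
  simp_rw [hintegrand, integral_const_mul, integral_Ioi_pow_mul_one_add_exp_reflect, hpow]
  ring

/-- Explicit moment formula for the reflecting weight (Lemma 4.1, identity (ziid0)):
`E[Zᵏ · m̄] = (Δ^{k/2}/√(2π)) (∫_{−a}^∞ zᵏ e^{−z²/2} dz + ∫_a^∞ (z−2a)ᵏ e^{−z²/2} dz)`. -/
theorem stmt_4 (L Δ σ0 x : ℝ) (hΔ : 0 < Δ) (hσ0 : 0 < σ0) (hx : L ≤ x)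
    {Ω : Type*} [MeasurableSpace Ω] (μ : Measure Ω) [IsProbabilityMeasure μ]
    (Z U : Ω → ℝ) (hZm : Measurable Z) (hUm : Measurable U)
    (hZ : μ.map Z = gaussianReal 0 Δ.toNNReal)
    (hU : μ.map U = volume.restrict (Set.Icc (0 : ℝ) 1))
    (hZU : IndepFun Z U μ)
    (X : Ω → ℝ) (hX : ∀ ω, X ω = x + σ0 * Z ω)
    (a : ℝ) (ha : a = (x - L) / (σ0 * Real.sqrt Δ))
    (p : Ω → ℝ)
    (hp : ∀ ω, p ω = Real.exp (-2 * (x - L) * (X ω - L) / (σ0 ^ 2 * Δ)))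
    (mbar : Ω → ℝ)
    (hmbar : ∀ ω, mbar ω
      = (if L < X ω then (1 : ℝ) else 0) * (1 + if U ω ≤ p ω then 1 else 0))
    (k : ℕ) :
    ∫ ω, Z ω ^ k * mbar ω ∂μ
      = Δ ^ ((k : ℝ) / 2) / Real.sqrt (2 * Real.pi) *
          ((∫ z in Set.Ioi (-a), z ^ k * Real.exp (-z ^ 2 / 2))
            + ∫ z in Set.Ioi a, (z - 2 * a) ^ k * Real.exp (-z ^ 2 / 2)) := by
  lift Δ to ℝ≥0 using hΔ.le
  rw [Real.toNNReal_coe] at hZ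
  set g : ℝ → ℝ := fun z => exp (-2 * (x - L) * (x + σ0 * z - L) / (σ0 ^ 2 * Δ))
  have hcut : ∀ z, L < x + σ0 * z ↔ (L - x) / σ0 < z := fun z => by
    rw [div_lt_iff₀ hσ0]; constructor <;> intro <;> linarith
  have hweight : ∀ ω, Z ω ^ k * mbar ω
      = (Ioi ((L - x) / σ0)).indicator (· ^ k) (Z ω) * (1 + if U ω ≤ g (Z ω) then 1 else 0) := by
    intro ω
    simp only [hmbar, hp, hX, indicator_apply, mem_Ioi, hcut, g]
    split_ifs <;> ring
  have hg : ∀ z ∈ Ioi ((L - x) / σ0), g z ∈ Icc 0 1 := by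
    intro z hz
    rw [mem_Ioi, ← hcut] at hz
    refine ⟨(exp_pos _).le, exp_le_one_iff.2 (div_nonpos_of_nonpos_of_nonneg ?_ (by positivity))⟩
    nlinarith
  have hlower : (L - x) / σ0 = -(a * √Δ) := by rw [ha]; field_simp; ring
  have hg_eq : ∀ z, g z = exp (-2 * a * (a + z / √Δ)) := fun z => by
    simp only [g, ha]
    congr 1
    field_simp
    rw [sq_sqrt Δ.coe_nonneg]
    ring
  simp_rw [hweight]
  rw [integral_indicator_mul_one_add_ite_uniform_le hZU hZm hUm hU measurableSet_Ioi
      (by fun_prop) (by fun_prop) (hZ ▸ integrable_pow_gaussianReal _ _ k) hg, hZ, hlower]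
  simp_rw [hg_eq]
  exact setIntegral_Ioi_pow_mul_one_add_exp_gaussianReal (by simpa using hΔ.ne') a k
end

section
/- First and second moment identities for the reflecting weight (Lemma 4.1, (ziid)): set ϑ = (2π)^{−1/2} e^{−a²/2} − a·Φ̄(a). Then E[Z·m̄] = 2√Δ·ϑ, E[Z²·m̄] = Δ − 4Δ·a·ϑ, and 0 ≤ ϑ ≤ (2π)^{−1/2} e^{−a²/2}. -/
/-!
With `c = a√Δ` the event `X > L` is `Z > -c`, and `p = exp (-2c(Z + c)/Δ)`. Integrating out the
independent uniform `U` turns the coin `1_{U ≤ p}` into its probability `p`, so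
`E[f(Z) m̄] = E[f(Z) (1 + p(Z)); Z > -c]`. Since `p` is the likelihood ratio `φ(z + 2c)/φ(z)` of
the Gaussian density `φ`, the second term is the contribution of the reflected path,
`∫_{z > c} f(z - 2c) φ(z) dz`. For `f(z) = z, z²` everything then reduces to the Gaussian tail
integrals `∫_b^∞ zᵏ e^{-z²/2v} dz`, `k = 0, 1, 2`, computed by integration by parts. Finally
`a Φ̄(a) = ∫_a^∞ a φ ≤ ∫_a^∞ t φ(t) dt = φ(a)` gives the bounds on `ϑ`.
-/

open MeasureTheory ProbabilityTheory Real Set Filter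

section GaussianIntegrals

variable {v : ℝ}

lemma exp_neg_sq_div_eq (z : ℝ) : exp (-z ^ 2 / (2 * v)) = exp (-(2 * v)⁻¹ * z ^ 2) := by
  ring_nf

lemma integrable_exp_neg_sq_div (hv : 0 < v) :
    Integrable fun z : ℝ ↦ exp (-z ^ 2 / (2 * v)) := by
  simpa only [exp_neg_sq_div_eq] using integrable_exp_neg_mul_sq (b := (2 * v)⁻¹) (by positivity)

lemma integrable_mul_exp_neg_sq_div (hv : 0 < v) :
    Integrable fun z : ℝ ↦ z * exp (-z ^ 2 / (2 * v)) := by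
  simpa only [exp_neg_sq_div_eq] using
    integrable_mul_exp_neg_mul_sq (b := (2 * v)⁻¹) (by positivity)

lemma integrable_sq_mul_exp_neg_sq_div (hv : 0 < v) :
    Integrable fun z : ℝ ↦ z ^ 2 * exp (-z ^ 2 / (2 * v)) := by
  simpa only [exp_neg_sq_div_eq, rpow_two] using
    integrable_rpow_mul_exp_neg_mul_sq (b := (2 * v)⁻¹) (s := 2) (by positivity) (by norm_num)

lemma hasDerivAt_exp_neg_sq_div (hv : v ≠ 0) (z : ℝ) :
    HasDerivAt (fun z ↦ exp (-z ^ 2 / (2 * v))) (-(z / v) * exp (-z ^ 2 / (2 * v))) z := by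
  have hexponent : HasDerivAt (fun z : ℝ ↦ -z ^ 2 / (2 * v)) (-(z / v)) z := by
    refine (((hasDerivAt_pow 2 z).neg).div_const (2 * v)).congr_deriv ?_
    field_simp
    ring
  exact hexponent.exp.congr_deriv (mul_comm _ _)

lemma integral_Ioi_mul_exp_neg_sq_div (hv : 0 < v) (b : ℝ) :
    ∫ z in Ioi b, z * exp (-z ^ 2 / (2 * v)) = v * exp (-b ^ 2 / (2 * v)) := by
  have hderiv (z : ℝ) : HasDerivAt (fun z ↦ -v * exp (-z ^ 2 / (2 * v)))
      (z * exp (-z ^ 2 / (2 * v))) z := by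
    refine ((hasDerivAt_exp_neg_sq_div hv.ne' z).const_mul (-v)).congr_deriv ?_
    field_simp
  have hlim := tendsto_zero_of_hasDerivAt_of_integrableOn_Ioi (a := b) (fun z _ ↦ hderiv z)
    (integrable_mul_exp_neg_sq_div hv).integrableOn
    ((integrable_exp_neg_sq_div hv).const_mul (-v)).integrableOn
  rw [integral_Ioi_of_hasDerivAt_of_tendsto' (fun z _ ↦ hderiv z)
    (integrable_mul_exp_neg_sq_div hv).integrableOn hlim]
  ring

lemma integral_Ioi_sq_mul_exp_neg_sq_div (hv : 0 < v) (b : ℝ) :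
    ∫ z in Ioi b, z ^ 2 * exp (-z ^ 2 / (2 * v))
      = v * b * exp (-b ^ 2 / (2 * v)) + v * ∫ z in Ioi b, exp (-z ^ 2 / (2 * v)) := by
  have hderiv (z : ℝ) : HasDerivAt (fun z ↦ -v * (z * exp (-z ^ 2 / (2 * v))))
      (z ^ 2 * exp (-z ^ 2 / (2 * v)) - v * exp (-z ^ 2 / (2 * v))) z := by
    refine (((hasDerivAt_id z).mul (hasDerivAt_exp_neg_sq_div hv.ne' z)).const_mul
      (-v)).congr_deriv ?_
    field_simp
    simp only [id_eq]
    ring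
  have hint :=
    (integrable_sq_mul_exp_neg_sq_div hv).sub ((integrable_exp_neg_sq_div hv).const_mul v)
  have hlim := tendsto_zero_of_hasDerivAt_of_integrableOn_Ioi (a := b) (fun z _ ↦ hderiv z)
    hint.integrableOn ((integrable_mul_exp_neg_sq_div hv).const_mul (-v)).integrableOn
  have := integral_Ioi_of_hasDerivAt_of_tendsto' (a := b) (fun z _ ↦ hderiv z)
    hint.integrableOn hlim
  rw [integral_sub (integrable_sq_mul_exp_neg_sq_div hv).integrableOn
    ((integrable_exp_neg_sq_div hv).const_mul v).integrableOn, integral_const_mul] at this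
  linarith

lemma integral_Iic_add_integral_Ioi_exp_neg_sq_div (hv : 0 < v) (b : ℝ) :
    (∫ z in Iic b, exp (-z ^ 2 / (2 * v))) + ∫ z in Ioi b, exp (-z ^ 2 / (2 * v))
      = √(2 * π * v) := by
  rw [intervalIntegral.integral_Iic_add_Ioi (integrable_exp_neg_sq_div hv).integrableOn
    (integrable_exp_neg_sq_div hv).integrableOn]
  simp only [exp_neg_sq_div_eq, integral_gaussian, div_inv_eq_mul]
  ring_nf

lemma integral_Ioi_exp_neg_sq_div_eq_sqrt_mul (hv : 0 < v) (b : ℝ) :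
    ∫ z in Ioi b, exp (-z ^ 2 / (2 * v)) = √v * ∫ t in Ioi (b / √v), exp (-t ^ 2 / 2) := by
  have hs : 0 < √v := sqrt_pos.mpr hv
  have := integral_comp_mul_left_Ioi (fun z ↦ exp (-z ^ 2 / (2 * v))) (b / √v) hs
  rw [mul_div_cancel₀ _ hs.ne'] at this
  have hscale (t : ℝ) : exp (-(√v * t) ^ 2 / (2 * v)) = exp (-t ^ 2 / 2) := by
    rw [mul_pow, sq_sqrt hv.le]
    field_simp
  simp_rw [hscale] at this
  rw [this, smul_eq_mul, ← mul_assoc, mul_inv_cancel₀ hs.ne', one_mul]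

lemma mul_integral_Ioi_exp_neg_sq_div_le (hv : 0 < v) (b : ℝ) :
    b * ∫ z in Ioi b, exp (-z ^ 2 / (2 * v)) ≤ v * exp (-b ^ 2 / (2 * v)) := by
  rw [← integral_Ioi_mul_exp_neg_sq_div hv, ← integral_const_mul]
  refine setIntegral_mono_on ((integrable_exp_neg_sq_div hv).const_mul b).integrableOn
    (integrable_mul_exp_neg_sq_div hv).integrableOn measurableSet_Ioi fun z hz ↦ ?_
  exact mul_le_mul_of_nonneg_right (le_of_lt hz) (exp_pos _).le

end GaussianIntegrals

section Reflection

variable {v : ℝ}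

lemma integral_Ioi_comp_add_right (g : ℝ → ℝ) (b d : ℝ) :
    ∫ z in Ioi b, g (z + d) = ∫ z in Ioi (b + d), g z := by
  simpa using (measurePreserving_add_right volume d).setIntegral_preimage_emb
    (measurableEmbedding_addRight d) g (Ioi (b + d))

lemma exp_neg_sq_div_mul_exp (hv : v ≠ 0) (c z : ℝ) :
    exp (-z ^ 2 / (2 * v)) * exp (-2 * c * (z + c) / v) = exp (-(z + 2 * c) ^ 2 / (2 * v)) := by
  rw [← exp_add]
  congr 1
  field_simp
  ring

lemma integral_indicator_mul_exp_mul_exp_neg_sq_div (hv : v ≠ 0) (f : ℝ → ℝ) (c : ℝ) :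
    ∫ z, (Ioi (-c)).indicator f z * exp (-2 * c * (z + c) / v) * exp (-z ^ 2 / (2 * v))
      = ∫ z in Ioi c, f (z - 2 * c) * exp (-z ^ 2 / (2 * v)) := by
  have hshift := integral_Ioi_comp_add_right (fun w ↦ f (w - 2 * c) * exp (-w ^ 2 / (2 * v)))
    (-c) (2 * c)
  simp only [add_sub_cancel_right, show -c + 2 * c = c by ring] at hshift
  rw [← hshift, ← integral_indicator measurableSet_Ioi]
  congr 1 with z
  by_cases hz : z ∈ Ioi (-c)
  · simp only [indicator_of_mem hz, ← exp_neg_sq_div_mul_exp hv c z]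
    ring
  · simp [hz]

lemma integral_Ioi_neg_exp_neg_sq_div_add (hv : 0 < v) (c : ℝ) :
    (∫ z in Ioi (-c), exp (-z ^ 2 / (2 * v))) + ∫ z in Ioi c, exp (-z ^ 2 / (2 * v))
      = √(2 * π * v) := by
  rw [← integral_Iic_add_integral_Ioi_exp_neg_sq_div hv c, ← integral_comp_neg_Iic]
  simp only [neg_sq]

lemma integral_Ioi_reflected_first_moment (hv : 0 < v) (c : ℝ) :
    (∫ z in Ioi (-c), z * exp (-z ^ 2 / (2 * v)))
        + ∫ z in Ioi c, (z - 2 * c) * exp (-z ^ 2 / (2 * v))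
      = 2 * v * exp (-c ^ 2 / (2 * v)) - 2 * c * ∫ z in Ioi c, exp (-z ^ 2 / (2 * v)) := by
  simp only [sub_mul]
  rw [integral_sub (integrable_mul_exp_neg_sq_div hv).integrableOn
      ((integrable_exp_neg_sq_div hv).const_mul _).integrableOn, integral_const_mul,
    integral_Ioi_mul_exp_neg_sq_div hv, integral_Ioi_mul_exp_neg_sq_div hv, neg_sq]
  ring

lemma integral_Ioi_reflected_second_moment (hv : 0 < v) (c : ℝ) :
    (∫ z in Ioi (-c), z ^ 2 * exp (-z ^ 2 / (2 * v)))
        + ∫ z in Ioi c, (z - 2 * c) ^ 2 * exp (-z ^ 2 / (2 * v))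
      = v * √(2 * π * v) - 4 * c * v * exp (-c ^ 2 / (2 * v))
        + 4 * c ^ 2 * ∫ z in Ioi c, exp (-z ^ 2 / (2 * v)) := by
  have hexpand (z : ℝ) : (z - 2 * c) ^ 2 * exp (-z ^ 2 / (2 * v))
      = z ^ 2 * exp (-z ^ 2 / (2 * v)) - 4 * c * (z * exp (-z ^ 2 / (2 * v)))
        + 4 * c ^ 2 * exp (-z ^ 2 / (2 * v)) := by ring
  have h2 := (integrable_sq_mul_exp_neg_sq_div hv).integrableOn (s := Ioi c)
  have h1 := ((integrable_mul_exp_neg_sq_div hv).const_mul (4 * c)).integrableOn (s := Ioi c)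
  have h0 := ((integrable_exp_neg_sq_div hv).const_mul (4 * c ^ 2)).integrableOn (s := Ioi c)
  have h21 : IntegrableOn
      (fun z ↦ z ^ 2 * exp (-z ^ 2 / (2 * v)) - 4 * c * (z * exp (-z ^ 2 / (2 * v)))) (Ioi c) :=
    h2.sub h1
  simp only [hexpand]
  rw [integral_add h21 h0, integral_sub h2 h1, integral_const_mul, integral_const_mul,
    integral_Ioi_sq_mul_exp_neg_sq_div hv, integral_Ioi_sq_mul_exp_neg_sq_div hv,
    integral_Ioi_mul_exp_neg_sq_div hv, neg_sq, ← integral_Ioi_neg_exp_neg_sq_div_add hv c]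
  ring

end Reflection

lemma integral_gaussianReal_eq_mul_integral {v : ℝ} (hv : 0 < v) (g : ℝ → ℝ) :
    ∫ z, g z ∂gaussianReal 0 v.toNNReal
      = (√(2 * π * v))⁻¹ * ∫ z, g z * exp (-z ^ 2 / (2 * v)) := by
  rw [integral_gaussianReal_eq_integral_smul (by simpa using hv), ← integral_const_mul]
  congr 1 with z
  simp only [gaussianPDFReal, coe_toNNReal', hv.le, sup_of_le_left, sqrt_mul', Nat.ofNat_nonneg,
    sqrt_mul, mul_inv_rev, sub_zero, smul_eq_mul]
  ring

lemma measureReal_Iic_uniform {t : ℝ} (ht : 0 ≤ t) :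
    (volume.restrict (Icc (0 : ℝ) 1)).real (Iic t) = min t 1 := by
  have hinter : Iic t ∩ Icc 0 1 = Icc 0 (min t 1) := by
    ext u
    simp only [mem_inter_iff, mem_Iic, mem_Icc, le_min_iff]
    tauto
  rw [measureReal_restrict_apply measurableSet_Iic, hinter, volume_real_Icc]
  simp [ht]

section ReflectingWeight

variable {Ω : Type*} [MeasurableSpace Ω] {μ : Measure Ω} [IsFiniteMeasure μ] {Z U : Ω → ℝ}

lemma integral_mul_ite_le_of_indepFun_uniform (hZ : Measurable Z) (hU : Measurable U)
    (hZU : IndepFun Z U μ) (hUlaw : μ.map U = volume.restrict (Icc 0 1))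
    {h q : ℝ → ℝ} (hh : Integrable h (μ.map Z)) (hq : Measurable q)
    (hq0 : ∀ z, 0 ≤ q z) :
    ∫ ω, h (Z ω) * (if U ω ≤ q (Z ω) then 1 else 0) ∂μ
      = ∫ z, h z * min (q z) 1 ∂μ.map Z := by
  set F : ℝ × ℝ → ℝ := fun p ↦ h p.1 * (if p.2 ≤ q p.1 then 1 else 0)
  have hlaw : μ.map (fun ω ↦ (Z ω, U ω)) = (μ.map Z).prod (μ.map U) :=
    (indepFun_iff_map_prod_eq_prod_map_map hZ.aemeasurable hU.aemeasurable).mp hZU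
  have hFm : AEStronglyMeasurable F ((μ.map Z).prod (μ.map U)) :=
    hh.1.comp_fst.mul (Measurable.ite (measurableSet_le measurable_snd (hq.comp measurable_fst))
      measurable_const measurable_const).aestronglyMeasurable
  have hFi : Integrable F ((μ.map Z).prod (μ.map U)) := by
    refine (hh.comp_fst _).mono hFm (ae_of_all _ fun p ↦ ?_)
    simp only [F, norm_mul]
    split_ifs <;> simp
  have hinner (z : ℝ) : ∫ u, F (z, u) ∂μ.map U = h z * min (q z) 1 := by
    have hind : (fun u ↦ F (z, u)) = fun u ↦ h z * (Iic (q z)).indicator 1 u := by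
      ext u
      simp [F, indicator_apply]
    rw [hind, integral_const_mul, integral_indicator_one measurableSet_Iic, hUlaw,
      measureReal_Iic_uniform (hq0 z)]
  calc ∫ ω, h (Z ω) * (if U ω ≤ q (Z ω) then 1 else 0) ∂μ
      = ∫ p, F p ∂μ.map (fun ω ↦ (Z ω, U ω)) :=
        (integral_map (hZ.prodMk hU).aemeasurable (hlaw ▸ hFm)).symm
    _ = ∫ z, h z * min (q z) 1 ∂μ.map Z := by
        rw [hlaw, integral_prod F hFi]
        simp only [hinner]

variable {v c : ℝ}

lemma integral_mul_reflectingWeight (hv : 0 < v) (hc : 0 ≤ c) (hZ : Measurable Z)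
    (hU : Measurable U) (hZU : IndepFun Z U μ) (hZlaw : μ.map Z = gaussianReal 0 v.toNNReal)
    (hUlaw : μ.map U = volume.restrict (Icc 0 1)) {f : ℝ → ℝ}
    (hf : Integrable f (gaussianReal 0 v.toNNReal)) :
    ∫ ω, f (Z ω) * ((if -c < Z ω then 1 else 0)
        * (1 + if U ω ≤ exp (-2 * c * (Z ω + c) / v) then 1 else 0)) ∂μ
      = (√(2 * π * v))⁻¹ * ((∫ z in Ioi (-c), f z * exp (-z ^ 2 / (2 * v)))
        + ∫ z in Ioi c, f (z - 2 * c) * exp (-z ^ 2 / (2 * v))) := by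
  set h := (Ioi (-c)).indicator f
  set q : ℝ → ℝ := fun z ↦ exp (-2 * c * (z + c) / v)
  have hh : Integrable h (μ.map Z) := hZlaw ▸ hf.indicator measurableSet_Ioi
  have hhZ : Integrable (fun ω ↦ h (Z ω)) μ :=
    (integrable_map_measure hh.1 hZ.aemeasurable).mp hh
  have hsplit (ω : Ω) : f (Z ω) * ((if -c < Z ω then 1 else 0)
        * (1 + if U ω ≤ exp (-2 * c * (Z ω + c) / v) then 1 else 0))
      = h (Z ω) + h (Z ω) * (if U ω ≤ q (Z ω) then 1 else 0) := by
    by_cases hω : -c < Z ω <;> simp [h, q, hω, mul_add]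
  have hq_le (z : ℝ) (hz : z ∈ Ioi (-c)) : q z ≤ 1 := by
    refine exp_le_one_iff.mpr (div_nonpos_of_nonpos_of_nonneg ?_ hv.le)
    nlinarith [mem_Ioi.mp hz]
  have hmin (z : ℝ) : h z * min (q z) 1 = h z * q z := by
    by_cases hz : z ∈ Ioi (-c)
    · rw [min_eq_left (hq_le z hz)]
    · simp [h, hz]
  have hhZ' : Integrable (fun ω ↦ h (Z ω) * (if U ω ≤ q (Z ω) then 1 else 0)) μ := by
    refine hhZ.mono ?_ (ae_of_all _ fun ω ↦ ?_)
    · exact hhZ.1.mul (Measurable.ite (measurableSet_le hU (by fun_prop)) measurable_const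
        measurable_const).aestronglyMeasurable
    · simp only [norm_mul]
      split_ifs <;> simp
  simp only [hsplit]
  rw [integral_add hhZ hhZ', integral_mul_ite_le_of_indepFun_uniform hZ hU hZU hUlaw hh
      (q := q) (by fun_prop) fun z ↦ (exp_pos _).le, ← integral_map hZ.aemeasurable hh.1]
  have hfirst : ∫ z, h z * exp (-z ^ 2 / (2 * v))
      = ∫ z in Ioi (-c), f z * exp (-z ^ 2 / (2 * v)) := by
    rw [← integral_indicator measurableSet_Ioi]
    congr 1 with z
    exact (indicator_mul_left (Ioi (-c)) f fun z ↦ exp (-z ^ 2 / (2 * v))).symm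
  simp only [hmin]
  rw [hZlaw, integral_gaussianReal_eq_mul_integral hv, integral_gaussianReal_eq_mul_integral hv,
    hfirst, integral_indicator_mul_exp_mul_exp_neg_sq_div hv.ne', mul_add]

end ReflectingWeight

/-- First and second moment identities for the reflecting weight (Lemma 4.1, (ziid)):
with `ϑ = (2π)^{−1/2} e^{−a²/2} − a·Φ̄(a)` one has `E[Z·m̄] = 2√Δ·ϑ`,
`E[Z²·m̄] = Δ − 4Δ·a·ϑ` and `0 ≤ ϑ ≤ (2π)^{−1/2} e^{−a²/2}`. -/
theorem stmt_5 (L Δ σ0 x : ℝ) (hΔ : 0 < Δ) (hσ0 : 0 < σ0) (hx : L ≤ x)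
    {Ω : Type*} [MeasurableSpace Ω] (μ : Measure Ω) [IsProbabilityMeasure μ]
    (Z U : Ω → ℝ) (hZm : Measurable Z) (hUm : Measurable U)
    (hZ : μ.map Z = gaussianReal 0 Δ.toNNReal)
    (hU : μ.map U = volume.restrict (Set.Icc (0 : ℝ) 1))
    (hZU : IndepFun Z U μ)
    (X : Ω → ℝ) (hX : ∀ ω, X ω = x + σ0 * Z ω)
    (a : ℝ) (ha : a = (x - L) / (σ0 * Real.sqrt Δ))
    (p : Ω → ℝ)
    (hp : ∀ ω, p ω = Real.exp (-2 * (x - L) * (X ω - L) / (σ0 ^ 2 * Δ)))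
    (mbar : Ω → ℝ)
    (hmbar : ∀ ω, mbar ω
      = (if L < X ω then (1 : ℝ) else 0) * (1 + if U ω ≤ p ω then 1 else 0))
    (Φ : ℝ → ℝ)
    (hΦ : ∀ s, Φ s = (1 / Real.sqrt (2 * Real.pi)) * ∫ z in Set.Iic s, Real.exp (-z ^ 2 / 2))
    (ϑ : ℝ)
    (hϑ : ϑ = (1 / Real.sqrt (2 * Real.pi)) * Real.exp (-a ^ 2 / 2) - a * (1 - Φ a)) :
    (∫ ω, Z ω * mbar ω ∂μ = 2 * Real.sqrt Δ * ϑ)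
      ∧ (∫ ω, Z ω ^ 2 * mbar ω ∂μ = Δ - 4 * Δ * a * ϑ)
      ∧ 0 ≤ ϑ ∧ ϑ ≤ (1 / Real.sqrt (2 * Real.pi)) * Real.exp (-a ^ 2 / 2) := by
  have hs : 0 < √Δ := sqrt_pos.mpr hΔ
  have hπ : 0 < √(2 * π) := sqrt_pos.mpr (by positivity)
  set c := (x - L) / σ0 with hc_def
  have hc : 0 ≤ c := div_nonneg (sub_nonneg.mpr hx) hσ0.le
  have hca : c = a * √Δ := by rw [ha, hc_def]; field_simp
  have hweight (ω : Ω) : mbar ω = (if -c < Z ω then 1 else 0)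
      * (1 + if U ω ≤ exp (-2 * c * (Z ω + c) / Δ) then 1 else 0) := by
    have hevent : L < X ω ↔ -c < Z ω := by
      rw [hX, hc_def, ← neg_div, div_lt_iff₀ hσ0]
      constructor <;> intro h <;> linarith
    have hexponent : -2 * (x - L) * (X ω - L) / (σ0 ^ 2 * Δ) = -2 * c * (Z ω + c) / Δ := by
      rw [hX, hc_def]; field_simp; ring
    simp only [hmbar, hp, hevent, hexponent]
  set G := ∫ t in Ioi a, exp (-t ^ 2 / 2)
  have hρc : exp (-c ^ 2 / (2 * Δ)) = exp (-a ^ 2 / 2) := by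
    rw [hca, mul_pow, sq_sqrt hΔ.le]; field_simp
  have htail : ∫ z in Ioi c, exp (-z ^ 2 / (2 * Δ)) = √Δ * G := by
    rw [integral_Ioi_exp_neg_sq_div_eq_sqrt_mul hΔ, hca, mul_div_cancel_right₀ _ hs.ne']
  have hΦa : 1 - Φ a = G / √(2 * π) := by
    have hsplit := integral_Iic_add_integral_Ioi_exp_neg_sq_div one_pos a
    simp only [mul_one] at hsplit
    rw [hΦ, eq_sub_of_add_eq hsplit, one_div, mul_sub, inv_mul_cancel₀ hπ.ne']
    ring
  have hϑG : ϑ = (exp (-a ^ 2 / 2) - a * G) / √(2 * π) := by rw [hϑ, hΦa]; field_simp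
  have hsqrt : √(2 * π * Δ) = √(2 * π) * √Δ := sqrt_mul (by positivity) Δ
  have hG : 0 ≤ a * G := mul_nonneg (by rw [ha]; positivity)
    (setIntegral_nonneg measurableSet_Ioi fun t _ ↦ (exp_pos _).le)
  have hGle : a * G ≤ exp (-a ^ 2 / 2) := by
    simpa using mul_integral_Ioi_exp_neg_sq_div_le one_pos a
  refine ⟨?_, ?_, ?_, ?_⟩
  · simp only [hweight]
    rw [integral_mul_reflectingWeight (f := fun z ↦ z) hΔ hc hZm hUm hZU hZ hU
      ((memLp_id_gaussianReal 1).integrable le_rfl), integral_Ioi_reflected_first_moment hΔ,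
      hρc, htail, hsqrt, hϑG, hca]
    field_simp
    simp only [sq_sqrt hΔ.le]
    ring
  · simp only [hweight]
    rw [integral_mul_reflectingWeight (f := fun z ↦ z ^ 2) hΔ hc hZm hUm hZU hZ hU
      (memLp_id_gaussianReal 2).integrable_sq, integral_Ioi_reflected_second_moment hΔ,
      hρc, htail, hsqrt, hϑG, hca]
    field_simp
    simp only [sq_sqrt hΔ.le]
    ring
  · rw [hϑG]; exact div_nonneg (by linarith) hπ.le
  · rw [hϑG, one_div_mul_eq_div]; exact div_le_div_of_nonneg_right (by linarith) hπ.le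
end

section
/- Martingale/supermartingale structure of the reflecting and killing product weights: with respect to the filtration (F_i)_{0≤i≤n}, the process (M̄_i)_{0≤i≤n} is a martingale (in particular E[M̄_n] = 1), while the process (M_i)_{0≤i≤n} is a supermartingale. -/
/-!
Conditionally on `F_i`, the pair `(Z_{i+1}, U_{i+1})` is independent of the past with law
`stepLaw Δ`, so `E[M̄_{i+1} | F_i] = M̄_i · ∫ m̄(X_i, ·) d(stepLaw Δ)`, and on `M̄_i ≠ 0` we have
`X_i ≥ L`. Integrating out the uniform variable leaves `1_{Z > s} (1 + p)` with
`s = (L - X_i) / σ(X_i)`. The Gaussian density times `p` is the Gaussian density recentred at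
`2s`, so by reflection through `s` the second term is `P(Z < s)` and the two terms add up to `1`.
Killing weights are at most `1`, so `M` decreases pathwise.
-/

open MeasureTheory ProbabilityTheory Real

/-- The law of one Euler step auxiliary pair: a Gaussian `N(0, d)` increment together with
an independent uniform variable on `[0,1]`. -/
noncomputable def stepLaw (d : ℝ) : Measure (ℝ × ℝ) :=
  (gaussianReal 0 d.toNNReal).prod (volume.restrict (Set.Icc (0 : ℝ) 1))

open scoped NNReal
open Set

instance : IsProbabilityMeasure (volume.restrict (Icc (0 : ℝ) 1)) :=
  ⟨by simp [Real.volume_Icc]⟩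

instance (d : ℝ) : IsProbabilityMeasure (stepLaw d) := by
  unfold stepLaw; infer_instance

namespace ProbabilityTheory

theorem IndepFun.condExp_comp_prodMk_ae_eq
    {Ω β γ E : Type*} {mΩ : MeasurableSpace Ω} {mβ : MeasurableSpace β} [MeasurableSpace γ]
    [StandardBorelSpace γ] [Nonempty γ] [NormedAddCommGroup E] [NormedSpace ℝ E]
    [CompleteSpace E] {μ : Measure Ω} [IsFiniteMeasure μ] {X : Ω → β} {Y : Ω → γ}
    (hXY : IndepFun X Y μ) (hX : Measurable X) (hY : Measurable Y) {f : β × γ → E}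
    (hf : StronglyMeasurable f) (hfi : Integrable (fun ω => f (X ω, Y ω)) μ) :
    μ[fun ω => f (X ω, Y ω) | mβ.comap X] =ᵐ[μ] fun ω => ∫ y, f (X ω, y) ∂(μ.map Y) := by
  have hcond : condDistrib Y X μ =ᵐ[μ.map X] Kernel.const β (μ.map Y) := by
    refine condDistrib_ae_eq_of_measure_eq_compProd_of_measurable hX hY ?_
    rw [Measure.compProd_const]
    exact (indepFun_iff_map_prod_eq_prod_map_map hX.aemeasurable hY.aemeasurable).1 hXY
  filter_upwards [condExp_prod_ae_eq_integral_condDistrib hX hY.aemeasurable hf hfi,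
    ae_of_ae_map hX.aemeasurable hcond] with ω h1 h2
  rw [h1, h2, Kernel.const_apply]

section MapEqPi

variable {Ω α : Type*} {mΩ : MeasurableSpace Ω} [MeasurableSpace α] {μ : Measure Ω}
  {ν : Measure α} [IsProbabilityMeasure ν] {ξ : ℕ → Ω → α} {n : ℕ}

def firstSteps (ξ : ℕ → Ω → α) (i : ℕ) (ω : Ω) : Fin i → α := fun j => ξ j ω

theorem measurable_firstSteps (hξ : ∀ j, Measurable (ξ j)) (i : ℕ) :
    Measurable (firstSteps ξ i) :=
  measurable_pi_lambda _ fun j => hξ j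

theorem map_eq_of_map_firstSteps_eq_pi (hξ : ∀ j, Measurable (ξ j))
    (hlaw : μ.map (firstSteps ξ n) = Measure.pi fun _ => ν) (j : Fin n) : μ.map (ξ j) = ν := by
  rw [← (measurePreserving_eval (fun _ : Fin n => ν) j).map_eq, ← hlaw,
    Measure.map_map (measurable_pi_apply j) (measurable_firstSteps hξ n)]
  rfl

theorem indepFun_firstSteps_of_map_eq_pi [IsProbabilityMeasure μ] (hξ : ∀ j, Measurable (ξ j))
    (hlaw : μ.map (firstSteps ξ n) = Measure.pi fun _ => ν) {i : ℕ} (hi : i < n) :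
    IndepFun (firstSteps ξ i) (ξ i) μ := by
  have hind : iIndepFun (ι := Fin n) (fun j => ξ j) μ := by
    rw [iIndepFun_iff_map_fun_eq_pi_map fun j : Fin n => (hξ j).aemeasurable]
    simp only [map_eq_of_map_firstSteps_eq_pi hξ hlaw]
    exact hlaw
  let last : Fin n := ⟨i, hi⟩
  have hφ : Measurable fun (v : Finset.Iio last → α) (j : Fin i) =>
      v ⟨Fin.castLE hi.le j, by simp [last, Fin.lt_def]⟩ := by fun_prop
  have hψ : Measurable fun (v : ({last} : Finset (Fin n)) → α) =>
      v ⟨last, Finset.mem_singleton_self _⟩ := measurable_pi_apply _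
  exact (hind.indepFun_finset _ _ (by simp) fun j => hξ j).comp hφ hψ

end MapEqPi

section Gaussian

variable {v : ℝ≥0}

theorem gaussianPDFReal_mul_exp_eq (hv : v ≠ 0) {b : ℝ} (hb : b ≠ 0) (a z : ℝ) :
    gaussianPDFReal 0 v z * exp (-2 * a * (a + b * z) / (b ^ 2 * v))
      = gaussianPDFReal (-(2 * a / b)) v z := by
  have hv' : (v : ℝ) ≠ 0 := NNReal.coe_ne_zero.2 hv
  rw [gaussianPDFReal, gaussianPDFReal, mul_assoc, ← exp_add]
  congr 2
  field_simp
  ring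

theorem setIntegral_gaussianReal_exp_eq (hv : v ≠ 0) {b : ℝ} (hb : b ≠ 0) (a : ℝ)
    {S : Set ℝ} (hS : MeasurableSet S) :
    ∫ z in S, exp (-2 * a * (a + b * z) / (b ^ 2 * v)) ∂gaussianReal 0 v
      = (gaussianReal (-(2 * a / b)) v).real S := by
  rw [← integral_indicator hS, integral_gaussianReal_eq_integral_smul hv, measureReal_def,
    gaussianReal_apply_eq_integral _ hv, ENNReal.toReal_ofReal
      (setIntegral_nonneg hS fun z _ => gaussianPDFReal_nonneg _ _ z), ← integral_indicator hS]
  congr 1 with z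
  by_cases hz : z ∈ S
  · rw [indicator_of_mem hz, indicator_of_mem hz, smul_eq_mul, gaussianPDFReal_mul_exp_eq hv hb]
  · simp [indicator_of_notMem hz]

theorem gaussianReal_real_Ioi_eq_Iio (s : ℝ) :
    (gaussianReal (2 * s) v).real (Ioi s) = (gaussianReal 0 v).real (Iio s) := by
  have h := gaussianReal_map_const_sub (μ := 0) (v := v) (2 * s)
  rw [sub_zero] at h
  rw [← h, map_measureReal_apply (by fun_prop) measurableSet_Ioi]
  congr 1 with z
  simp only [mem_preimage, mem_Ioi, mem_Iio]
  constructor <;> intro <;> linarith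

theorem gaussianReal_real_Ioi_add_Iio (hv : v ≠ 0) (s : ℝ) :
    (gaussianReal 0 v).real (Ioi s) + (gaussianReal 0 v).real (Iio s) = 1 := by
  have := nullSingletonClass_gaussianReal (μ := 0) hv
  rw [← measureReal_union Ioi_disjoint_Iio_same measurableSet_Iio, Ioi_union_Iio,
    measureReal_compl (measurableSet_singleton s)]
  simp [measureReal_def]

end Gaussian

end ProbabilityTheory

theorem MeasureTheory.integral_eq_of_condExp_succ_ae_eq {Ω E : Type*} {mΩ : MeasurableSpace Ω}
    [NormedAddCommGroup E] [NormedSpace ℝ E] [CompleteSpace E] {μ : Measure Ω}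
    [IsFiniteMeasure μ] {f : ℕ → Ω → E} {F : ℕ → MeasurableSpace Ω} (hF : ∀ i, F i ≤ mΩ)
    {n : ℕ} (hf : ∀ i < n, μ[f (i + 1)|F i] =ᵐ[μ] f i) : ∫ ω, f n ω ∂μ = ∫ ω, f 0 ω ∂μ := by
  induction n with
  | zero => rfl
  | succ n ih =>
    rw [← integral_condExp (hF n), integral_congr_ae (hf n n.lt_succ_self),
      ih fun i hi => hf i (hi.trans n.lt_succ_self)]

theorem Fin.measurable_init {α : Type*} [MeasurableSpace α] {i : ℕ} :
    Measurable (@Fin.init i fun _ => α) :=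
  measurable_pi_lambda _ fun _ => measurable_pi_apply _

theorem setIntegral_Icc_ite_le {p : ℝ} (hp₀ : 0 ≤ p) (hp₁ : p ≤ 1) :
    ∫ u in Icc (0 : ℝ) 1, (if u ≤ p then (1 : ℝ) else 0) = p := by
  have hind : (fun u : ℝ => if u ≤ p then (1 : ℝ) else 0) = (Iic p).indicator 1 := by
    ext u; simp [indicator_apply]
  have hset : Iic p ∩ Icc 0 1 = Icc 0 p := by
    ext u
    simp only [mem_inter_iff, mem_Iic, mem_Icc]
    exact ⟨fun ⟨h₁, h₂, _⟩ => ⟨h₂, h₁⟩, fun ⟨h₁, h₂⟩ => ⟨h₂, h₁, h₂.trans hp₁⟩⟩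
  rw [hind, integral_indicator_one measurableSet_Iic,
    measureReal_restrict_apply measurableSet_Iic, hset, Real.volume_real_Icc_of_le hp₀, sub_zero]

namespace KilledEuler

variable {L Δ x : ℝ} {σ : ℝ → ℝ}

/-- With `y = X_{i-1}` and `z = Z_i` this is the crossing probability `p_i`. -/
noncomputable def crossProb (L Δ : ℝ) (σ : ℝ → ℝ) (y z : ℝ) : ℝ :=
  exp (-2 * (y - L) * (y + σ y * z - L) / (σ y ^ 2 * Δ))

noncomputable def reflectWeight (L Δ : ℝ) (σ : ℝ → ℝ) (y : ℝ) (ζ : ℝ × ℝ) : ℝ :=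
  (if L < y + σ y * ζ.1 then 1 else 0) * (1 + if ζ.2 ≤ crossProb L Δ σ y ζ.1 then 1 else 0)

noncomputable def killWeight (L Δ : ℝ) (σ : ℝ → ℝ) (y : ℝ) (ζ : ℝ × ℝ) : ℝ :=
  (if L < y + σ y * ζ.1 then 1 else 0) * (if crossProb L Δ σ y ζ.1 < ζ.2 then 1 else 0)

theorem measurable_crossProb (hσ : Measurable σ) :
    Measurable (Function.uncurry (crossProb L Δ σ)) := by
  unfold crossProb; fun_prop

theorem measurable_reflectWeight (hσ : Measurable σ) :
    Measurable (Function.uncurry (reflectWeight L Δ σ)) := by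
  refine Measurable.mul ?_ (measurable_const.add ?_) <;>
    refine Measurable.ite ?_ (by fun_prop) (by fun_prop)
  · exact measurableSet_lt measurable_const (by fun_prop)
  · exact measurableSet_le (by fun_prop)
      ((measurable_crossProb hσ).comp (measurable_fst.prodMk measurable_snd.fst))

theorem measurable_killWeight (hσ : Measurable σ) :
    Measurable (Function.uncurry (killWeight L Δ σ)) := by
  refine Measurable.mul ?_ ?_ <;> refine Measurable.ite ?_ (by fun_prop) (by fun_prop)
  · exact measurableSet_lt measurable_const (by fun_prop)
  · exact measurableSet_lt
      ((measurable_crossProb hσ).comp (measurable_fst.prodMk measurable_snd.fst)) (by fun_prop)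

theorem reflectWeight_nonneg (y : ℝ) (ζ : ℝ × ℝ) : 0 ≤ reflectWeight L Δ σ y ζ := by
  unfold reflectWeight; positivity

theorem reflectWeight_le_two (y : ℝ) (ζ : ℝ × ℝ) : reflectWeight L Δ σ y ζ ≤ 2 := by
  unfold reflectWeight; split_ifs <;> norm_num

theorem killWeight_nonneg (y : ℝ) (ζ : ℝ × ℝ) : 0 ≤ killWeight L Δ σ y ζ := by
  unfold killWeight; positivity

theorem killWeight_le_one (y : ℝ) (ζ : ℝ × ℝ) : killWeight L Δ σ y ζ ≤ 1 := by
  unfold killWeight; split_ifs <;> norm_num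

theorem crossProb_pos (y z : ℝ) : 0 < crossProb L Δ σ y z := exp_pos _

theorem crossProb_le_one (hΔ : 0 ≤ Δ) {y z : ℝ} (hy : L ≤ y) (hz : L ≤ y + σ y * z) :
    crossProb L Δ σ y z ≤ 1 := by
  rw [crossProb, exp_le_one_iff]
  apply div_nonpos_of_nonpos_of_nonneg _ (by positivity)
  nlinarith [mul_nonneg (sub_nonneg.2 hy) (sub_nonneg.2 hz)]

theorem integral_uniform_reflectWeight (hΔ : 0 ≤ Δ) {y : ℝ} (hy : L ≤ y) (z : ℝ) :
    ∫ u in Icc (0 : ℝ) 1, reflectWeight L Δ σ y (z, u)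
      = if L < y + σ y * z then 1 + crossProb L Δ σ y z else 0 := by
  unfold reflectWeight
  split_ifs with hz
  · simp only [one_mul]
    rw [integral_add (integrable_const 1),
      setIntegral_Icc_ite_le (crossProb_pos y z).le (crossProb_le_one hΔ hy hz.le)]
    · simp
    · exact (integrable_const (1 : ℝ)).mono'
        (Measurable.ite measurableSet_Iic measurable_const measurable_const).aestronglyMeasurable
        (Filter.Eventually.of_forall fun u => by split_ifs <;> norm_num)
  · simp

theorem setIntegral_Ioi_crossProb (hΔ : 0 < Δ) {y : ℝ} (hσy : 0 < σ y) :
    ∫ z in Ioi ((L - y) / σ y), crossProb L Δ σ y z ∂gaussianReal 0 Δ.toNNReal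
      = (gaussianReal 0 Δ.toNNReal).real (Iio ((L - y) / σ y)) := by
  have hexp : ∀ z, crossProb L Δ σ y z
      = exp (-2 * (y - L) * ((y - L) + σ y * z) / (σ y ^ 2 * (Δ.toNNReal : ℝ))) := fun z => by
    rw [crossProb, Real.coe_toNNReal _ hΔ.le]; ring_nf
  simp_rw [hexp]
  rw [setIntegral_gaussianReal_exp_eq (by simpa using hΔ) hσy.ne' _ measurableSet_Ioi,
    show -(2 * (y - L) / σ y) = 2 * ((L - y) / σ y) by ring, gaussianReal_real_Ioi_eq_Iio]

theorem integral_reflectWeight (hΔ : 0 < Δ) (hσ : Measurable σ) {y : ℝ} (hσy : 0 < σ y)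
    (hy : L ≤ y) : ∫ ζ, reflectWeight L Δ σ y ζ ∂stepLaw Δ = 1 := by
  set s := (L - y) / σ y
  have hv : Δ.toNNReal ≠ 0 := by simpa using hΔ
  have hcross : ∀ z, L < y + σ y * z ↔ z ∈ Ioi s := fun z => by
    rw [mem_Ioi, div_lt_iff₀ hσy]; constructor <;> intro <;> linarith
  have hint : Integrable (reflectWeight L Δ σ y) (stepLaw Δ) :=
    Integrable.of_bound (measurable_reflectWeight hσ).of_uncurry_left.aestronglyMeasurable 2
      (Filter.Eventually.of_forall fun ζ => by
        rw [Real.norm_of_nonneg (reflectWeight_nonneg y ζ)]; exact reflectWeight_le_two y ζ)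
  rw [stepLaw, integral_prod _ hint]
  have hind : (fun z => if L < y + σ y * z then 1 + crossProb L Δ σ y z else 0)
      = (Ioi s).indicator fun z => 1 + crossProb L Δ σ y z := by
    ext z; simp only [indicator_apply, hcross]
  have hcross_int : IntegrableOn (crossProb L Δ σ y) (Ioi s) (gaussianReal 0 Δ.toNNReal) :=
    IntegrableOn.of_bound (measure_lt_top _ _)
      (measurable_crossProb hσ).of_uncurry_left.aestronglyMeasurable 1
      (ae_restrict_of_forall_mem measurableSet_Ioi fun z hz => by
        rw [Real.norm_of_nonneg (crossProb_pos y z).le]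
        exact crossProb_le_one hΔ.le hy ((hcross z).2 hz).le)
  simp_rw [integral_uniform_reflectWeight hΔ.le hy]
  rw [hind, integral_indicator measurableSet_Ioi, integral_add (integrable_const 1) hcross_int,
    setIntegral_const, smul_eq_mul, mul_one, setIntegral_Ioi_crossProb hΔ hσy,
    gaussianReal_real_Ioi_add_Iio hv]

/-- `eulerPath x σ i (firstSteps ξ i ω)` is `X_i ω` when `ξ j = (Z_{j+1}, U_{j+1})`. -/
noncomputable def eulerPath (x : ℝ) (σ : ℝ → ℝ) : (i : ℕ) → (Fin i → ℝ × ℝ) → ℝ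
  | 0, _ => x
  | i + 1, ξ =>
    eulerPath x σ i (Fin.init ξ) + σ (eulerPath x σ i (Fin.init ξ)) * (ξ (Fin.last i)).1

noncomputable def weightProd (x : ℝ) (σ : ℝ → ℝ) (w : ℝ → ℝ × ℝ → ℝ) :
    (i : ℕ) → (Fin i → ℝ × ℝ) → ℝ
  | 0, _ => 1
  | i + 1, ξ =>
    weightProd x σ w i (Fin.init ξ) * w (eulerPath x σ i (Fin.init ξ)) (ξ (Fin.last i))

variable {w : ℝ → ℝ × ℝ → ℝ}

theorem measurable_eulerPath (hσ : Measurable σ) (i : ℕ) : Measurable (eulerPath x σ i) := by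
  induction i with
  | zero => exact measurable_const
  | succ i ih =>
    have hinit := ih.comp Fin.measurable_init
    exact hinit.add ((hσ.comp hinit).mul (measurable_pi_apply _).fst)

theorem measurable_weightProd (hσ : Measurable σ) (hw : Measurable (Function.uncurry w))
    (i : ℕ) : Measurable (weightProd x σ w i) := by
  induction i with
  | zero => exact measurable_const
  | succ i ih =>
    exact (ih.comp Fin.measurable_init).mul (hw.comp
      (((measurable_eulerPath hσ i).comp Fin.measurable_init).prodMk (measurable_pi_apply _)))

theorem weightProd_nonneg (hw : ∀ y ζ, 0 ≤ w y ζ) (i : ℕ) (ξ : Fin i → ℝ × ℝ) :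
    0 ≤ weightProd x σ w i ξ := by
  induction i with
  | zero => exact zero_le_one
  | succ i ih => exact mul_nonneg (ih _) (hw _ _)

theorem weightProd_le_pow {B : ℝ} (hw₀ : ∀ y ζ, 0 ≤ w y ζ) (hwB : ∀ y ζ, w y ζ ≤ B) (i : ℕ)
    (ξ : Fin i → ℝ × ℝ) : weightProd x σ w i ξ ≤ B ^ i := by
  induction i with
  | zero => exact le_rfl
  | succ i ih =>
    exact mul_le_mul (ih _) (hwB _ _) (hw₀ _ _) (pow_nonneg ((hw₀ 0 0).trans (hwB 0 0)) _)

theorem le_eulerPath_of_weightProd_ne_zero (hx : L ≤ x)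
    (hw : ∀ y ζ, w y ζ ≠ 0 → L ≤ y + σ y * ζ.1) {i : ℕ} {ξ : Fin i → ℝ × ℝ}
    (hξ : weightProd x σ w i ξ ≠ 0) : L ≤ eulerPath x σ i ξ := by
  cases i with
  | zero => exact hx
  | succ i => exact hw _ _ (right_ne_zero_of_mul hξ)

theorem le_of_reflectWeight_ne_zero {y : ℝ} {ζ : ℝ × ℝ} (h : reflectWeight L Δ σ y ζ ≠ 0) :
    L ≤ y + σ y * ζ.1 := by
  by_contra hlt
  exact h (by rw [reflectWeight, if_neg fun h' => hlt h'.le, zero_mul])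

variable {Ω : Type*} {mΩ : MeasurableSpace Ω} {μ : Measure Ω} {ξ : ℕ → Ω → ℝ × ℝ}

theorem eq_eulerPath {X : ℕ → Ω → ℝ} (hX0 : ∀ ω, X 0 ω = x)
    (hXrec : ∀ i ω, X (i + 1) ω = X i ω + σ (X i ω) * (ξ i ω).1) (i : ℕ) (ω : Ω) :
    X i ω = eulerPath x σ i (firstSteps ξ i ω) := by
  induction i with
  | zero => exact hX0 ω
  | succ i ih => rw [hXrec, ih]; rfl

theorem prod_eq_weightProd {X : ℕ → Ω → ℝ} {m : ℕ → Ω → ℝ}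
    (hX : ∀ i ω, X i ω = eulerPath x σ i (firstSteps ξ i ω))
    (hm : ∀ i ω, m (i + 1) ω = w (X i ω) (ξ i ω)) (i : ℕ) (ω : Ω) :
    ∏ j ∈ Finset.range i, m (j + 1) ω = weightProd x σ w i (firstSteps ξ i ω) := by
  induction i with
  | zero => rfl
  | succ i ih => rw [Finset.prod_range_succ, ih, hm, hX]; rfl

theorem measurable_comap_weightProd (hσ : Measurable σ) (hw : Measurable (Function.uncurry w))
    (i : ℕ) : Measurable[MeasurableSpace.comap (firstSteps ξ i) inferInstance]
      fun ω => weightProd x σ w i (firstSteps ξ i ω) :=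
  (measurable_weightProd hσ hw i).comp (comap_measurable _)

theorem integrable_weightProd [IsFiniteMeasure μ] (hξ : ∀ j, Measurable (ξ j))
    (hσ : Measurable σ) (hw : Measurable (Function.uncurry w)) {B : ℝ} (hw₀ : ∀ y ζ, 0 ≤ w y ζ)
    (hwB : ∀ y ζ, w y ζ ≤ B) (i : ℕ) :
    Integrable (fun ω => weightProd x σ w i (firstSteps ξ i ω)) μ :=
  Integrable.of_bound ((measurable_weightProd hσ hw i).comp
    (measurable_firstSteps hξ i)).aestronglyMeasurable (B ^ i)
    (Filter.Eventually.of_forall fun ω => by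
      rw [Real.norm_of_nonneg (weightProd_nonneg hw₀ i _)]; exact weightProd_le_pow hw₀ hwB i _)

theorem condExp_weightProd_reflectWeight [IsProbabilityMeasure μ] (hξ : ∀ j, Measurable (ξ j))
    {n : ℕ} (hlaw : μ.map (firstSteps ξ n) = Measure.pi fun _ => stepLaw Δ)
    {i : ℕ} (hi : i < n) (hΔ : 0 < Δ) (hσ : Measurable σ) (hσ₀ : ∀ y, 0 < σ y) (hx : L ≤ x) :
    μ[fun ω => weightProd x σ (reflectWeight L Δ σ) (i + 1) (firstSteps ξ (i + 1) ω)
        | MeasurableSpace.comap (firstSteps ξ i) inferInstance]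
      =ᵐ[μ] fun ω => weightProd x σ (reflectWeight L Δ σ) i (firstSteps ξ i ω) := by
  have hf : Measurable fun q : (Fin i → ℝ × ℝ) × (ℝ × ℝ) =>
      weightProd x σ (reflectWeight L Δ σ) i q.1
        * reflectWeight L Δ σ (eulerPath x σ i q.1) q.2 :=
    ((measurable_weightProd hσ (measurable_reflectWeight hσ) i).comp measurable_fst).mul
      ((measurable_reflectWeight hσ).comp
        (((measurable_eulerPath hσ i).comp measurable_fst).prodMk measurable_snd))
  refine (IndepFun.condExp_comp_prodMk_ae_eq (indepFun_firstSteps_of_map_eq_pi hξ hlaw hi)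
    (measurable_firstSteps hξ i) (hξ i) hf.stronglyMeasurable
    (integrable_weightProd hξ hσ (measurable_reflectWeight hσ) reflectWeight_nonneg
      reflectWeight_le_two (i + 1))).trans (Filter.Eventually.of_forall fun ω => ?_)
  dsimp only
  rw [map_eq_of_map_firstSteps_eq_pi hξ hlaw ⟨i, hi⟩, integral_const_mul]
  by_cases hG : weightProd x σ (reflectWeight L Δ σ) i (firstSteps ξ i ω) = 0
  · rw [hG, zero_mul]
  · rw [integral_reflectWeight hΔ hσ (hσ₀ _)
      (le_eulerPath_of_weightProd_ne_zero (w := reflectWeight L Δ σ) hx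
        (fun _ _ => le_of_reflectWeight_ne_zero) hG), mul_one]

theorem condExp_weightProd_succ_le [IsFiniteMeasure μ] (hξ : ∀ j, Measurable (ξ j))
    (hσ : Measurable σ) (hw : Measurable (Function.uncurry w)) (hw₀ : ∀ y ζ, 0 ≤ w y ζ)
    (hw₁ : ∀ y ζ, w y ζ ≤ 1) (i : ℕ) :
    μ[fun ω => weightProd x σ w (i + 1) (firstSteps ξ (i + 1) ω)
        | MeasurableSpace.comap (firstSteps ξ i) inferInstance]
      ≤ᵐ[μ] fun ω => weightProd x σ w i (firstSteps ξ i ω) := by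
  calc _ ≤ᵐ[μ] μ[fun ω => weightProd x σ w i (firstSteps ξ i ω)
          | MeasurableSpace.comap (firstSteps ξ i) inferInstance] :=
        condExp_mono (integrable_weightProd hξ hσ hw hw₀ hw₁ (i + 1))
          (integrable_weightProd hξ hσ hw hw₀ hw₁ i) (Filter.Eventually.of_forall fun ω =>
            mul_le_of_le_one_right (weightProd_nonneg hw₀ i _) (hw₁ _ _))
    _ = _ := condExp_of_stronglyMeasurable (measurable_firstSteps hξ i).comap_le
        (measurable_comap_weightProd hσ hw i).stronglyMeasurable
        (integrable_weightProd hξ hσ hw hw₀ hw₁ i)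

end KilledEuler

open KilledEuler in
theorem stmt_9_general (L T c : ℝ) (hT : 0 < T) (hc : 0 < c)
    (n : ℕ) (Δ : ℝ) (hΔ : Δ = T / n)
    (σ : ℝ → ℝ) (hσ2 : ContDiff ℝ 2 σ)
    (hσc : ∀ z, c ≤ σ z)
    {Ω : Type*} [MeasurableSpace Ω] (μ : Measure Ω) [IsProbabilityMeasure μ]
    (Z U : ℕ → Ω → ℝ) (hZm : ∀ i, Measurable (Z i)) (hUm : ∀ i, Measurable (U i))
    (hlaw : μ.map (fun ω => fun i : Fin n => (Z (i.1 + 1) ω, U (i.1 + 1) ω))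
        = Measure.pi fun _ : Fin n => stepLaw Δ)
    (x : ℝ) (hx : L ≤ x)
    (X : ℕ → Ω → ℝ) (hX0 : ∀ ω, X 0 ω = x)
    (hXrec : ∀ i ω, X (i + 1) ω = X i ω + σ (X i ω) * Z (i + 1) ω)
    (p : ℕ → Ω → ℝ)
    (hp : ∀ i ω, p (i + 1) ω
      = Real.exp (-2 * (X i ω - L) * (X (i + 1) ω - L) / (σ (X i ω) ^ 2 * Δ)))
    (mker mbar : ℕ → Ω → ℝ)
    (hm : ∀ i ω, mker (i + 1) ω
      = (if L < X (i + 1) ω then (1 : ℝ) else 0)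
          * (if p (i + 1) ω < U (i + 1) ω then 1 else 0))
    (hmb : ∀ i ω, mbar (i + 1) ω
      = (if L < X (i + 1) ω then (1 : ℝ) else 0)
          * (1 + if U (i + 1) ω ≤ p (i + 1) ω then 1 else 0))
    (M Mb : ℕ → Ω → ℝ)
    (hM : ∀ i ω, M i ω = ∏ j ∈ Finset.range i, mker (j + 1) ω)
    (hMb : ∀ i ω, Mb i ω = ∏ j ∈ Finset.range i, mbar (j + 1) ω)
    (F : ℕ → MeasurableSpace Ω)
    (hF : ∀ i, F i = MeasurableSpace.comap
        (fun ω => fun j : Fin i => (Z (j.1 + 1) ω, U (j.1 + 1) ω)) inferInstance) :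
    (∀ i ≤ n, Integrable (Mb i) μ)
      ∧ (∀ i ≤ n, Measurable[F i] (Mb i))
      ∧ (∫ ω, Mb n ω ∂μ = 1)
      ∧ (∀ i < n, μ[Mb (i + 1)|F i] =ᵐ[μ] Mb i)
      ∧ (∀ i ≤ n, Integrable (M i) μ)
      ∧ (∀ i ≤ n, Measurable[F i] (M i))
      ∧ (∀ i < n, μ[M (i + 1)|F i] ≤ᵐ[μ] M i) := by
  set ξ : ℕ → Ω → ℝ × ℝ := fun j ω => (Z (j + 1) ω, U (j + 1) ω)
  have hξ : ∀ j, Measurable (ξ j) := fun j => (hZm _).prodMk (hUm _)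
  have hσ : Measurable σ := hσ2.continuous.measurable
  have hσ₀ : ∀ z, 0 < σ z := fun z => hc.trans_le (hσc z)
  have hΔ₀ : ∀ i < n, 0 < Δ := fun i hi => hΔ ▸ div_pos hT (by norm_cast; omega)
  have hXξ := eq_eulerPath (ξ := ξ) hX0 hXrec
  obtain rfl : Mb = fun i ω => weightProd x σ (reflectWeight L Δ σ) i (firstSteps ξ i ω) :=
    funext₂ fun i ω => (hMb i ω).trans <| prod_eq_weightProd hXξ
      (fun i ω => by rw [hmb, hp, hXrec]; rfl) i ω
  obtain rfl : M = fun i ω => weightProd x σ (killWeight L Δ σ) i (firstSteps ξ i ω) :=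
    funext₂ fun i ω => (hM i ω).trans <| prod_eq_weightProd hXξ
      (fun i ω => by rw [hm, hp, hXrec]; rfl) i ω
  obtain rfl : F = fun i => MeasurableSpace.comap (firstSteps ξ i) inferInstance := funext hF
  have hmart := fun i (hi : i < n) =>
    condExp_weightProd_reflectWeight hξ hlaw hi (hΔ₀ i hi) hσ hσ₀ hx
  refine ⟨fun i _ => integrable_weightProd hξ hσ (measurable_reflectWeight hσ)
      reflectWeight_nonneg reflectWeight_le_two i,
    fun i _ => measurable_comap_weightProd hσ (measurable_reflectWeight hσ) i, ?_, hmart,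
    fun i _ => integrable_weightProd hξ hσ (measurable_killWeight hσ)
      killWeight_nonneg killWeight_le_one i,
    fun i _ => measurable_comap_weightProd hσ (measurable_killWeight hσ) i,
    fun i _ => condExp_weightProd_succ_le hξ hσ (measurable_killWeight hσ) killWeight_nonneg
      killWeight_le_one i⟩
  refine (integral_eq_of_condExp_succ_ae_eq
    (f := fun i ω => weightProd x σ (reflectWeight L Δ σ) i (firstSteps ξ i ω))
    (fun i => (measurable_firstSteps hξ i).comap_le) hmart).trans ?_
  simp [weightProd]

/-- Martingale/supermartingale structure of the reflecting and killing product weights: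
with respect to the filtration `(F_i)`, the process `(M̄_i)` is a martingale (in particular
`E[M̄_n] = 1`), while the process `(M_i)` is a supermartingale. -/
theorem stmt_9 (L T c : ℝ) (hT : 0 < T) (hc : 0 < c)
    (n : ℕ) (hn : 1 ≤ n) (Δ : ℝ) (hΔ : Δ = T / n)
    (σ : ℝ → ℝ) (hσ2 : ContDiff ℝ 2 σ)
    (hσb : ∃ C, ∀ z, |σ z| ≤ C) (hσ'b : ∃ C, ∀ z, |deriv σ z| ≤ C)
    (hσ''b : ∃ C, ∀ z, |deriv (deriv σ) z| ≤ C)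
    (hσc : ∀ z, c ≤ σ z)
    {Ω : Type*} [MeasurableSpace Ω] (μ : Measure Ω) [IsProbabilityMeasure μ]
    (Z U : ℕ → Ω → ℝ) (hZm : ∀ i, Measurable (Z i)) (hUm : ∀ i, Measurable (U i))
    (hlaw : μ.map (fun ω => fun i : Fin n => (Z (i.1 + 1) ω, U (i.1 + 1) ω))
        = Measure.pi fun _ : Fin n => stepLaw Δ)
    (x : ℝ) (hx : L ≤ x)
    (X : ℕ → Ω → ℝ) (hX0 : ∀ ω, X 0 ω = x)
    (hXrec : ∀ i ω, X (i + 1) ω = X i ω + σ (X i ω) * Z (i + 1) ω)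
    (p : ℕ → Ω → ℝ)
    (hp : ∀ i ω, p (i + 1) ω
      = Real.exp (-2 * (X i ω - L) * (X (i + 1) ω - L) / (σ (X i ω) ^ 2 * Δ)))
    (mker mbar : ℕ → Ω → ℝ)
    (hm : ∀ i ω, mker (i + 1) ω
      = (if L < X (i + 1) ω then (1 : ℝ) else 0)
          * (if p (i + 1) ω < U (i + 1) ω then 1 else 0))
    (hmb : ∀ i ω, mbar (i + 1) ω
      = (if L < X (i + 1) ω then (1 : ℝ) else 0)
          * (1 + if U (i + 1) ω ≤ p (i + 1) ω then 1 else 0))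
    (M Mb : ℕ → Ω → ℝ)
    (hM : ∀ i ω, M i ω = ∏ j ∈ Finset.range i, mker (j + 1) ω)
    (hMb : ∀ i ω, Mb i ω = ∏ j ∈ Finset.range i, mbar (j + 1) ω)
    (F : ℕ → MeasurableSpace Ω)
    (hF : ∀ i, F i = MeasurableSpace.comap
        (fun ω => fun j : Fin i => (Z (j.1 + 1) ω, U (j.1 + 1) ω)) inferInstance) :
    (∀ i ≤ n, Integrable (Mb i) μ)
      ∧ (∀ i ≤ n, Measurable[F i] (Mb i))
      ∧ (∫ ω, Mb n ω ∂μ = 1)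
      ∧ (∀ i < n, μ[Mb (i + 1)|F i] =ᵐ[μ] Mb i)
      ∧ (∀ i ≤ n, Integrable (M i) μ)
      ∧ (∀ i ≤ n, Measurable[F i] (M i))
      ∧ (∀ i < n, μ[M (i + 1)|F i] ≤ᵐ[μ] M i) :=
  stmt_9_general L T c hT hc n Δ hΔ σ hσ2 hσc μ Z U hZm hUm hlaw x hx X hX0 hXrec p hp mker mbar hm
    hmb M Mb hM hMb F hF
end

section
/- Derivative representation for the killed Brownian semigroup via the reflected kernel: let f : [L,∞) → ℝ be continuously differentiable with f and f′ bounded and f(L) = 0. Then for every t > 0 the map x ↦ ∫_L^∞ f(y)·q⁻_t(x, y) dy is differentiable on [L,∞) (one-sidedly at x = L), and for every x ≥ L its derivative equals ∫_L^∞ f′(y)·q⁺_t(x, y) dy, which in turn equals ∫_ℝ f′(L + |x − L + w|)·g_t(w) dw (i.e. the expectation of f′ evaluated at Brownian motion started at x and reflected at L). -/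
/-!
Let `F` be the odd extension of `f` about `L`. Because `f L = 0` and `f` is `C¹`, `F` is `C¹` with
`F' v = f' (L + |v - L|)`, the even extension of `f'`. Folding the line at `L` (method of
images) gives `∫_L^∞ f q⁻ₜ(x, ·) = ∫ F (x + w) gₜ(w) dw` and
`∫_L^∞ f' q⁺ₜ(x, ·) = ∫ F' (x + w) gₜ(w) dw`, and since `F'` is bounded and `gₜ` integrable,
the convolution may be differentiated under the integral sign.
-/

open Real MeasureTheory Set

theorem setIntegral_Iic_eq_setIntegral_Ioi_comp_sub (h : ℝ → ℝ) (L : ℝ) :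
    ∫ v in Iic L, h v = ∫ y in Ioi L, h (2 * L - y) := by
  have := (Measure.measurePreserving_sub_left volume (2 * L)).setIntegral_preimage_emb
    (Homeomorph.subLeft (2 * L)).measurableEmbedding h (Iic L)
  rw [preimage_const_sub_Iic, integral_Ici_eq_integral_Ioi, two_mul, add_sub_cancel_right] at this
  rw [← this, two_mul]

theorem integral_comp_add_mul_eq_setIntegral_Ioi {Φ g : ℝ → ℝ} (hg : ∀ z, g (-z) = g z)
    (L x : ℝ) (hint : Integrable fun v => Φ v * g (v - x)) :
    ∫ w, Φ (x + w) * g w =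
      ∫ y in Ioi L, (Φ y * g (y - x) + Φ (2 * L - y) * g (y + x - 2 * L)) := by
  have h_mirror : IntegrableOn (fun y => Φ (2 * L - y) * g (y + x - 2 * L)) (Ioi L) := by
    refine (hint.comp_sub_left (2 * L)).integrableOn.congr_fun (fun y _ => ?_) measurableSet_Ioi
    rw [← hg (y + x - 2 * L), neg_sub, sub_add_eq_sub_sub]
  calc ∫ w, Φ (x + w) * g w = ∫ v, Φ v * g (v - x) := by
        rw [← integral_add_left_eq_self (μ := volume) (fun v => Φ v * g (v - x)) x]
        simp
    _ = (∫ v in Iic L, Φ v * g (v - x)) + ∫ y in Ioi L, Φ y * g (y - x) :=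
        (intervalIntegral.integral_Iic_add_Ioi hint.integrableOn hint.integrableOn).symm
    _ = (∫ y in Ioi L, Φ (2 * L - y) * g (y + x - 2 * L)) +
          ∫ y in Ioi L, Φ y * g (y - x) := by
        rw [setIntegral_Iic_eq_setIntegral_Ioi_comp_sub]
        congr 1
        refine setIntegral_congr_fun measurableSet_Ioi fun y _ => ?_
        rw [← hg (y + x - 2 * L), neg_sub, sub_add_eq_sub_sub]
    _ = _ := by
        rw [add_comm, ← integral_add hint.integrableOn h_mirror]

theorem hasDerivAt_integral_comp_add_mul {μ : Measure ℝ} {φ φ' g : ℝ → ℝ}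
    (hφ : ∀ u, HasDerivAt φ (φ' u) u) (hφ' : Continuous φ') {C C' : ℝ}
    (hφb : ∀ u, |φ u| ≤ C) (hφ'b : ∀ u, |φ' u| ≤ C') (hg : Integrable g μ) (x : ℝ) :
    HasDerivAt (fun x => ∫ w, φ (x + w) * g w ∂μ) (∫ w, φ' (x + w) * g w ∂μ) x := by
  have hφc : Continuous φ := continuous_iff_continuousAt.2 fun u => (hφ u).continuousAt
  refine (hasDerivAt_integral_of_dominated_loc_of_deriv_le (μ := μ)
    (F := fun x w => φ (x + w) * g w) (F' := fun x w => φ' (x + w) * g w)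
    (bound := fun w => C' * ‖g w‖) Filter.univ_mem (Filter.Eventually.of_forall fun x' => ?_)
    ?_ ?_ ?_ (hg.norm.const_mul C') ?_).2
  · exact ((hφc.comp (continuous_const_add x')).aestronglyMeasurable).mul hg.1
  · exact hg.bdd_mul (hφc.comp (continuous_const_add x)).aestronglyMeasurable
      (ae_of_all _ fun w => hφb _)
  · exact ((hφ'.comp (continuous_const_add x)).aestronglyMeasurable).mul hg.1
  · exact ae_of_all _ fun w x' _ => by
      rw [norm_mul]; exact mul_le_mul_of_nonneg_right (hφ'b _) (norm_nonneg _)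
  · exact ae_of_all _ fun w x' _ => by
      simpa using ((hφ (x' + w)).comp x' ((hasDerivAt_id x').add_const w)).mul_const (g w)

/-- Defined as a primitive of `v ↦ f' (L + |v - L|)`, so that it is differentiable everywhere,
also at `L`; when `f L = 0` it is the odd extension of `f` about `L`. -/
noncomputable def oddExtension (L : ℝ) (f : ℝ → ℝ) (v : ℝ) : ℝ :=
  ∫ s in L..v, deriv f (L + |s - L|)

section oddExtension

variable {L : ℝ} {f : ℝ → ℝ}

theorem hasDerivAt_oddExtension (hf' : Continuous (deriv f)) (v : ℝ) :
    HasDerivAt (oddExtension L f) (deriv f (L + |v - L|)) v := by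
  have hk : Continuous fun s => deriv f (L + |s - L|) := by fun_prop
  exact intervalIntegral.integral_hasDerivAt_right (hk.intervalIntegrable _ _)
    hk.stronglyMeasurable.stronglyMeasurableAtFilter hk.continuousAt

theorem oddExtension_of_le (hf : ContDiff ℝ 1 f) (hfL : f L = 0) {v : ℝ} (hv : L ≤ v) :
    oddExtension L f v = f v := by
  have h_eq : oddExtension L f v = ∫ s in L..v, deriv f s :=
    intervalIntegral.integral_congr fun s hs => by
      rw [uIcc_of_le hv] at hs
      simp only [abs_of_nonneg (sub_nonneg.2 hs.1), add_sub_cancel]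
  rw [h_eq, intervalIntegral.integral_deriv_eq_sub (fun s _ => hf.differentiable one_ne_zero s)
    ((hf.continuous_deriv le_rfl).intervalIntegrable _ _), hfL, sub_zero]

theorem oddExtension_of_ge (hf : ContDiff ℝ 1 f) (hfL : f L = 0) {v : ℝ} (hv : v ≤ L) :
    oddExtension L f v = -f (2 * L - v) := by
  have h_symm : oddExtension L f v = ∫ s in L..v, deriv f (L + |(2 * L - s) - L|) :=
    intervalIntegral.integral_congr fun s _ => by
      rw [show 2 * L - s - L = -(s - L) by ring, abs_neg]
  rw [h_symm, intervalIntegral.integral_comp_sub_left (fun s => deriv f (L + |s - L|)),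
    intervalIntegral.integral_symm, show 2 * L - L = L by ring]
  exact congrArg Neg.neg (oddExtension_of_le hf hfL (by linarith))

theorem abs_oddExtension_le (hf : ContDiff ℝ 1 f) (hfL : f L = 0) {C : ℝ}
    (hC : ∀ z, |f z| ≤ C) (v : ℝ) : |oddExtension L f v| ≤ C := by
  rcases le_total L v with hv | hv
  · rw [oddExtension_of_le hf hfL hv]; exact hC v
  · rw [oddExtension_of_ge hf hfL hv, abs_neg]; exact hC _

end oddExtension

theorem stmt_18_general (L t : ℝ) (ht : 0 < t)
    (g : ℝ → ℝ)
    (hg : ∀ z, g z = (1 / Real.sqrt (2 * Real.pi * t)) * Real.exp (-z ^ 2 / (2 * t)))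
    (f : ℝ → ℝ) (hf : ContDiff ℝ 1 f)
    (hfb : ∃ C, ∀ z, |f z| ≤ C) (hf'b : ∃ C, ∀ z, |deriv f z| ≤ C)
    (hfL : f L = 0)
    (x : ℝ) :
    HasDerivWithinAt
        (fun x' => ∫ y in Set.Ioi L, f y * (g (y - x') - g (y + x' - 2 * L)))
        (∫ y in Set.Ioi L, deriv f y * (g (y - x) + g (y + x - 2 * L)))
        (Set.Ici L) x
      ∧ (∫ y in Set.Ioi L, deriv f y * (g (y - x) + g (y + x - 2 * L)))
        = ∫ w : ℝ, deriv f (L + |x - L + w|) * g w := by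
  obtain ⟨C, hC⟩ := hfb
  obtain ⟨C', hC'⟩ := hf'b
  have hg_int : Integrable g := by
    convert ProbabilityTheory.integrable_gaussianPDFReal 0 t.toNNReal using 1
    ext z
    simp [hg, ProbabilityTheory.gaussianPDFReal, Real.coe_toNNReal _ ht.le]
  have hg_even : ∀ z, g (-z) = g z := by simp [hg]
  have hf' : Continuous (deriv f) := hf.continuous_deriv le_rfl
  have hF : Continuous (oddExtension L f) :=
    continuous_iff_continuousAt.2 fun v => (hasDerivAt_oddExtension hf' v).continuousAt
  have hF' : Continuous fun v => deriv f (L + |v - L|) := by fun_prop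
  have h_killed : ∀ x', ∫ y in Ioi L, f y * (g (y - x') - g (y + x' - 2 * L)) =
      ∫ w, oddExtension L f (x' + w) * g w := fun x' => by
    rw [integral_comp_add_mul_eq_setIntegral_Ioi hg_even L x'
      ((hg_int.comp_sub_right x').bdd_mul hF.aestronglyMeasurable
        (ae_of_all _ (abs_oddExtension_le hf hfL hC)))]
    refine setIntegral_congr_fun measurableSet_Ioi fun y (hy : L < y) => ?_
    rw [oddExtension_of_le hf hfL hy.le, oddExtension_of_ge hf hfL (by linarith),
      sub_sub_cancel]
    ring
  have h_reflected : ∫ y in Ioi L, deriv f y * (g (y - x) + g (y + x - 2 * L)) =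
      ∫ w, deriv f (L + |x + w - L|) * g w := by
    rw [integral_comp_add_mul_eq_setIntegral_Ioi (Φ := fun v => deriv f (L + |v - L|)) hg_even
      L x
      ((hg_int.comp_sub_right x).bdd_mul hF'.aestronglyMeasurable (ae_of_all _ fun v => hC' _))]
    refine setIntegral_congr_fun measurableSet_Ioi fun y (hy : L < y) => ?_
    simp only [abs_of_pos (sub_pos.2 hy), show 2 * L - y - L = -(y - L) by ring, abs_neg]
    ring_nf
  have h_deriv := hasDerivAt_integral_comp_add_mul (μ := volume) (hasDerivAt_oddExtension hf')
    hF' (abs_oddExtension_le hf hfL hC) (fun v => hC' _) hg_int x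
  refine ⟨?_, ?_⟩
  · rw [h_reflected]
    exact h_deriv.hasDerivWithinAt.congr (fun x' _ => h_killed x') (h_killed x)
  · simp_rw [h_reflected, add_sub_right_comm x]

/-- Derivative representation for the killed Brownian semigroup via the reflected kernel:
for `f ∈ C¹_b` with `f(L) = 0`, the map `x ↦ ∫_L^∞ f(y) q⁻ₜ(x,y) dy` is differentiable on
`[L,∞)` (one-sidedly at `x = L`) with derivative `∫_L^∞ f'(y) q⁺ₜ(x,y) dy`, which equals the
expectation of `f'` at Brownian motion started at `x` and reflected at `L`. -/
theorem stmt_18 (L t : ℝ) (ht : 0 < t)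
    (g : ℝ → ℝ)
    (hg : ∀ z, g z = (1 / Real.sqrt (2 * Real.pi * t)) * Real.exp (-z ^ 2 / (2 * t)))
    (f : ℝ → ℝ) (hf : ContDiff ℝ 1 f)
    (hfb : ∃ C, ∀ z, |f z| ≤ C) (hf'b : ∃ C, ∀ z, |deriv f z| ≤ C)
    (hfL : f L = 0)
    (x : ℝ) (hx : L ≤ x) :
    HasDerivWithinAt
        (fun x' => ∫ y in Set.Ioi L, f y * (g (y - x') - g (y + x' - 2 * L)))
        (∫ y in Set.Ioi L, deriv f y * (g (y - x) + g (y + x - 2 * L)))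
        (Set.Ici L) x
      ∧ (∫ y in Set.Ioi L, deriv f y * (g (y - x) + g (y + x - 2 * L)))
        = ∫ w : ℝ, deriv f (L + |x - L + w|) * g w :=
  stmt_18_general L t ht g hg f hf hfb hf'b hfL x
end
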